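/- If a sequence (Tₙ) of A-bounded operators converges A-uniformly to an A-bounded operator T (i.e., ‖Tₙ − T‖_A → 0), then for every q ∈ ℂ with 0 < |q| ≤ 1, ω_{A,q}(Tₙ) → ω_{A,q}(T). -/

import Mathlib

noncomputable def innA {H : Type*} [NormedAddCommGroup H] [InnerProductSpace ℂ H]
    (A : H →L[ℂ] H) (x y : H) : ℂ := inner ℂ (A x) y

noncomputable def snA {H : Type*} [NormedAddCommGroup H] [InnerProductSpace ℂ H]
    (A : H →L[ℂ] H) (x : H) : ℝ := Real.sqrt (innA A x x).re

noncomputable def opNormA {H : Type*} [NormedAddCommGroup H] [InnerProductSpace ℂ H]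
    (A T : H →L[ℂ] H) : ℝ := sSup {r : ℝ | ∃ x : H, snA A x = 1 ∧ r = snA A (T x)}

def ABounded {H : Type*} [NormedAddCommGroup H] [InnerProductSpace ℂ H]
    (A T : H →L[ℂ] H) : Prop := ∃ c > 0, ∀ x : H, snA A (T x) ≤ c * snA A x

noncomputable def wAq {H : Type*} [NormedAddCommGroup H] [InnerProductSpace ℂ H]
    (A T : H →L[ℂ] H) (q : ℂ) : ℝ :=
  sSup {r : ℝ | ∃ x y : H, snA A x = 1 ∧ snA A y = 1 ∧ innA A x y = q ∧
    r = ‖innA A (T x) y‖}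

noncomputable def cAq {H : Type*} [NormedAddCommGroup H] [InnerProductSpace ℂ H]
    (A T : H →L[ℂ] H) (q : ℂ) : ℝ :=
  sInf {r : ℝ | ∃ x y : H, snA A x = 1 ∧ snA A y = 1 ∧ innA A x y = q ∧
    r = ‖innA A (T x) y‖}

noncomputable def wA {H : Type*} [NormedAddCommGroup H] [InnerProductSpace ℂ H]
    (A T : H →L[ℂ] H) : ℝ :=
  sSup {r : ℝ | ∃ x : H, snA A x = 1 ∧ r = ‖innA A (T x) x‖}

noncomputable def cA {H : Type*} [NormedAddCommGroup H] [InnerProductSpace ℂ H]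
    (A T : H →L[ℂ] H) : ℝ :=
  sInf {r : ℝ | ∃ x : H, snA A x = 1 ∧ r = ‖innA A (T x) x‖}

def WAq {H : Type*} [NormedAddCommGroup H] [InnerProductSpace ℂ H]
    (A T : H →L[ℂ] H) (q : ℂ) : Set ℂ :=
  {r : ℂ | ∃ x y : H, snA A x = 1 ∧ snA A y = 1 ∧ innA A x y = q ∧ r = innA A (T x) y}

/-!
The map `T ↦ ω_{A,q}(T)` is `1`-Lipschitz for the `A`-operator seminorm on `A`-bounded operators:
writing `⟨S x, y⟩_A = ⟨T x, y⟩_A + ⟨(S - T) x, y⟩_A` and applying Cauchy–Schwarz for the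
semi-inner product `⟨·,·⟩_A` to the second term gives `ω_{A,q}(S) ≤ ω_{A,q}(T) + ‖S - T‖_A`.
Hence `|ω_{A,q}(Tₙ) - ω_{A,q}(T)| ≤ ‖Tₙ - T‖_A → 0`.
-/

section ASemiInner

variable {H : Type*} [NormedAddCommGroup H] [InnerProductSpace ℂ H] {A : H →L[ℂ] H}

lemma innA_conj_symm (hA : A.IsPositive) (x y : H) :
    starRingEnd ℂ (innA A x y) = innA A y x := by
  simp only [innA]
  rw [inner_conj_symm, hA.inner_left_eq_inner_right]

/-- `⟨·,·⟩_A` as a semi-inner product, to borrow Cauchy–Schwarz from `InnerProductSpace.Core`. -/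
noncomputable abbrev ContinuousLinearMap.IsPositive.innACore (hA : A.IsPositive) :
    PreInnerProductSpace.Core ℂ H where
  inner := innA A
  conj_inner_symm x y := innA_conj_symm hA y x
  re_inner_nonneg := hA.re_inner_nonneg_left
  add_left x y z := by simp only [innA, map_add, inner_add_left]
  smul_left x y r := by simp only [innA, map_smul, inner_smul_left]

lemma snA_nonneg (x : H) : 0 ≤ snA A x := Real.sqrt_nonneg _

lemma snA_mul_self (hA : A.IsPositive) (x : H) : snA A x * snA A x = (innA A x x).re :=
  Real.mul_self_sqrt (hA.re_inner_nonneg_left x)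

lemma norm_innA_le (hA : A.IsPositive) (x y : H) : ‖innA A x y‖ ≤ snA A x * snA A y := by
  have hCS : ‖innA A x y‖ * ‖innA A y x‖ ≤ (innA A x x).re * (innA A y y).re :=
    InnerProductSpace.Core.inner_mul_inner_self_le (c := hA.innACore) x y
  rw [← innA_conj_symm hA x y, Complex.norm_conj, ← snA_mul_self hA x, ← snA_mul_self hA y,
    mul_mul_mul_comm] at hCS
  exact (mul_self_le_mul_self_iff (norm_nonneg _)
    (mul_nonneg (snA_nonneg x) (snA_nonneg y))).mpr hCS

lemma snA_neg (x : H) : snA A (-x) = snA A x := by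
  simp only [snA, innA, map_neg, inner_neg_neg]

lemma snA_add_le (hA : A.IsPositive) (x y : H) : snA A (x + y) ≤ snA A x + snA A y := by
  have hexpand : (innA A (x + y) (x + y)).re
      = (innA A x x).re + 2 * (innA A x y).re + (innA A y y).re := by
    have hyx : (innA A y x).re = (innA A x y).re := by
      rw [← innA_conj_symm hA x y, Complex.conj_re]
    simp only [innA, map_add, inner_add_left, inner_add_right, Complex.add_re] at hyx ⊢
    linarith
  have hre : (innA A x y).re ≤ snA A x * snA A y :=
    (Complex.re_le_norm _).trans (norm_innA_le hA x y)
  have hsq : (innA A (x + y) (x + y)).re ≤ (snA A x + snA A y) ^ 2 := by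
    nlinarith [snA_mul_self hA x, snA_mul_self hA y]
  calc snA A (x + y) ≤ Real.sqrt ((snA A x + snA A y) ^ 2) := Real.sqrt_le_sqrt hsq
    _ = snA A x + snA A y := Real.sqrt_sq (add_nonneg (snA_nonneg x) (snA_nonneg y))

lemma snA_sub_le (hA : A.IsPositive) (x y : H) : snA A (x - y) ≤ snA A x + snA A y := by
  simpa only [sub_eq_add_neg, snA_neg] using snA_add_le hA x (-y)

end ASemiInner

section AOperators

variable {H : Type*} [NormedAddCommGroup H] [InnerProductSpace ℂ H] {A S T : H →L[ℂ] H}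

lemma ABounded.sub (hA : A.IsPositive) (hS : ABounded A S) (hT : ABounded A T) :
    ABounded A (S - T) := by
  obtain ⟨c, hc, hSc⟩ := hS
  obtain ⟨d, hd, hTd⟩ := hT
  refine ⟨c + d, add_pos hc hd, fun x => ?_⟩
  calc snA A (S x - T x) ≤ snA A (S x) + snA A (T x) := snA_sub_le hA _ _
    _ ≤ c * snA A x + d * snA A x := add_le_add (hSc x) (hTd x)
    _ = (c + d) * snA A x := by ring

lemma opNormA_nonneg (T : H →L[ℂ] H) : 0 ≤ opNormA A T :=
  Real.sSup_nonneg fun _ ⟨x, _, hr⟩ => hr ▸ snA_nonneg (T x)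

lemma snA_apply_le_opNormA (hT : ABounded A T) {x : H} (hx : snA A x = 1) :
    snA A (T x) ≤ opNormA A T := by
  obtain ⟨c, -, hTc⟩ := hT
  refine le_csSup ⟨c, ?_⟩ ⟨x, hx, rfl⟩
  rintro r ⟨z, hz, rfl⟩
  simpa only [hz, mul_one] using hTc z

lemma opNormA_sub_comm (S T : H →L[ℂ] H) : opNormA A (S - T) = opNormA A (T - S) := by
  have hswap : ∀ x, snA A ((S - T) x) = snA A ((T - S) x) := fun x => by
    rw [← neg_sub T S, neg_apply, snA_neg]
  simp only [opNormA, hswap]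

lemma norm_innA_apply_le_snA (hA : A.IsPositive) {x y : H} (hy : snA A y = 1) :
    ‖innA A (T x) y‖ ≤ snA A (T x) := by
  simpa only [hy, mul_one] using norm_innA_le hA (T x) y

lemma norm_innA_apply_le_wAq (hA : A.IsPositive) (hT : ABounded A T) {q : ℂ} {x y : H}
    (hx : snA A x = 1) (hy : snA A y = 1) (hq : innA A x y = q) :
    ‖innA A (T x) y‖ ≤ wAq A T q := by
  refine le_csSup ⟨opNormA A T, ?_⟩ ⟨x, y, hx, hy, hq, rfl⟩
  rintro r ⟨x', y', hx', hy', -, rfl⟩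
  exact (norm_innA_apply_le_snA hA hy').trans (snA_apply_le_opNormA hT hx')

lemma wAq_eq_zero_of_forall_ne {q : ℂ}
    (hq : ∀ x y : H, snA A x = 1 → snA A y = 1 → innA A x y ≠ q) (T : H →L[ℂ] H) :
    wAq A T q = 0 := by
  rw [wAq]
  convert Real.sSup_empty
  refine Set.eq_empty_of_forall_notMem ?_
  rintro r ⟨x, y, hx, hy, hxy, -⟩
  exact hq x y hx hy hxy

lemma wAq_le_wAq_add_opNormA (hA : A.IsPositive) (hS : ABounded A S) (hT : ABounded A T)
    {q : ℂ} {x₀ y₀ : H} (hx₀ : snA A x₀ = 1) (hy₀ : snA A y₀ = 1) (hq₀ : innA A x₀ y₀ = q) :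
    wAq A S q ≤ wAq A T q + opNormA A (S - T) := by
  refine csSup_le ⟨_, x₀, y₀, hx₀, hy₀, hq₀, rfl⟩ ?_
  rintro r ⟨x, y, hx, hy, hq, rfl⟩
  have hsplit : innA A (S x) y = innA A (T x) y + innA A ((S - T) x) y := by
    simp only [innA, sub_apply, map_sub, inner_sub_left, add_sub_cancel]
  calc ‖innA A (S x) y‖ ≤ ‖innA A (T x) y‖ + ‖innA A ((S - T) x) y‖ :=
        hsplit ▸ norm_add_le _ _
    _ ≤ wAq A T q + opNormA A (S - T) :=
        add_le_add (norm_innA_apply_le_wAq hA hT hx hy hq)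
          ((norm_innA_apply_le_snA hA hy).trans (snA_apply_le_opNormA (hS.sub hA hT) hx))

lemma abs_wAq_sub_wAq_le (hA : A.IsPositive) (hS : ABounded A S) (hT : ABounded A T) (q : ℂ) :
    |wAq A S q - wAq A T q| ≤ opNormA A (S - T) := by
  by_cases hq : ∃ x y : H, snA A x = 1 ∧ snA A y = 1 ∧ innA A x y = q
  · obtain ⟨x, y, hx, hy, hxy⟩ := hq
    have hST := wAq_le_wAq_add_opNormA hA hS hT hx hy hxy
    have hTS := wAq_le_wAq_add_opNormA hA hT hS hx hy hxy
    rw [opNormA_sub_comm] at hTS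
    exact abs_sub_le_iff.mpr ⟨by linarith, by linarith⟩
  · push Not at hq
    simpa only [wAq_eq_zero_of_forall_ne hq, sub_self, abs_zero] using opNormA_nonneg (S - T)

end AOperators

theorem stmt15_general {H : Type*} [NormedAddCommGroup H] [InnerProductSpace ℂ H]
    (A : H →L[ℂ] H) (hA : A.IsPositive)
    (Tn : ℕ → H →L[ℂ] H) (T : H →L[ℂ] H)
    (hTn : ∀ n, ABounded A (Tn n)) (hT : ABounded A T)
    (hconv : Filter.Tendsto (fun n => opNormA A (Tn n - T)) Filter.atTop (nhds 0))
    (q : ℂ) :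
    Filter.Tendsto (fun n => wAq A (Tn n) q) Filter.atTop (nhds (wAq A T q)) := by
  rw [← tendsto_sub_nhds_zero_iff]
  exact squeeze_zero_norm (fun n => abs_wAq_sub_wAq_le hA (hTn n) hT q) hconv

theorem stmt15 {H : Type*} [NormedAddCommGroup H] [InnerProductSpace ℂ H] [CompleteSpace H]
    (A : H →L[ℂ] H) (hA : A.IsPositive) (hA0 : A ≠ 0)
    (Tn : ℕ → H →L[ℂ] H) (T : H →L[ℂ] H)
    (hTn : ∀ n, ABounded A (Tn n)) (hT : ABounded A T)
    (hconv : Filter.Tendsto (fun n => opNormA A (Tn n - T)) Filter.atTop (nhds 0))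
    (q : ℂ) (hq0 : 0 < ‖q‖) (hq1 : ‖q‖ ≤ 1) :
    Filter.Tendsto (fun n => wAq A (Tn n) q) Filter.atTop (nhds (wAq A T q)) :=
  stmt15_general A hA Tn T hTn hT hconv q
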